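/- Let R be a connected generalized root system, a an object, and g: V^a → ℝ a linear map with g^{-1}(0) ∩ R(a) = ∅. Set R^+_g(a) := {α ∈ R(a) : g(α) > 0} and n := |(−R^+_g(a)) ∩ R^+(a)|, assumed finite. Then there exists f: {1,…,n} → I with 1^a s_{f,n}(R^+(a_{f,n})) = R^+_g(a); moreover, for any such f, (−R^+_g(a)) ∩ R^+(a) = { 1^a s_{f,t-1}(α^{a_{f,t-1}}_{f(t)}) : t ∈ {1,…,n} }. -/

import Mathlib

/-- A Cartan scheme `C(I, A, (τ_i), (C^a))`. -/
structure CartanScheme (I : Type*) [Fintype I] [DecidableEq I] (A : Type*) where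
  τ : I → A → A
  c : A → I → I → ℤ
  c_diag : ∀ a i, c a i i = 2
  c_nonpos : ∀ a i j, i ≠ j → c a i j ≤ 0
  c_zero_iff : ∀ a i j, i ≠ j → (c a i j = 0 ↔ c a j i = 0)
  τ_invol : ∀ i a, τ i (τ i a) = a
  c_invar : ∀ i a j, c (τ i a) i j = c a i j

namespace CartanScheme

variable {I : Type*} [Fintype I] [DecidableEq I] {A : Type*} (cs : CartanScheme I A)

/-- The map `s^a_i : V^a → V^{τ_i(a)}`, `α^a_j ↦ α^{τ_i(a)}_j − c^a_{ij} α^{τ_i(a)}_i`,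
written in the coordinates given by the bases `Π^a`, `Π^{τ_i(a)}`. -/
def sref (a : A) (i : I) (v : I → ℤ) : I → ℤ :=
  fun l => v l - (if l = i then ∑ j, cs.c a i j * v j else 0)

/-- `a_{f,t}`: the iterated images `a_{f,0} = a`, `a_{f,t} = τ_{f(t)}(a_{f,t-1})`. -/
def obj (a : A) (f : ℕ → I) : ℕ → A
  | 0 => a
  | t + 1 => cs.τ (f (t + 1)) (obj a f t)

/-- `1^a s_{f,t} : V^{a_{f,t}} → V^a`, defined by `1^a s_{f,0} = id` and
`1^a s_{f,t} = 1^a s_{f,t-1} ∘ s^{a_{f,t}}_{f(t)}`. -/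
def wmap (a : A) (f : ℕ → I) : ℕ → (I → ℤ) → (I → ℤ)
  | 0 => id
  | t + 1 => wmap a f t ∘ cs.sref (cs.obj a f (t + 1)) (f (t + 1))

end CartanScheme

/-- A connected generalized root system of type a Cartan scheme, with the spaces `V^a`
written in the coordinates given by the bases `Π^a` (so `α^a_i` is `Pi.single i 1`). -/
structure GenRootSystem (I : Type*) [Fintype I] [DecidableEq I] (A : Type*)
    extends CartanScheme I A where
  R : A → Set (I → ℤ)
  R1 : ∀ a, R a = (R a ∩ {v | ∀ i, 0 ≤ v i}) ∪ (-(R a ∩ {v | ∀ i, 0 ≤ v i}))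
  R2 : ∀ a i, R a ∩ (Set.range fun z : ℤ => z • (Pi.single i 1 : I → ℤ)) =
        {Pi.single i 1, -Pi.single i 1}
  R3 : ∀ a i, toCartanScheme.sref a i '' R a = R (τ i a)
  R4 : ∀ a b, a = b ↔ ∃ (f : ℕ → I) (t : ℕ), toCartanScheme.obj a f t = b ∧
        ∀ i, toCartanScheme.wmap a f t (Pi.single i 1) = Pi.single i 1
  R5 : ∀ a b, ∃ (f : ℕ → I) (t : ℕ), toCartanScheme.obj a f t = b

namespace GenRootSystem

variable {I : Type*} [Fintype I] [DecidableEq I] {A : Type*} (rs : GenRootSystem I A)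

/-- The positive roots `R^+(a)`. -/
def Rp (a : A) : Set (I → ℤ) := rs.R a ∩ {v | ∀ i, 0 ≤ v i}

/-- `a_{f,t}` for the root system. -/
def obj (a : A) (f : ℕ → I) (t : ℕ) : A := rs.toCartanScheme.obj a f t

/-- `1^a s_{f,t}` for the root system. -/
def wmap (a : A) (f : ℕ → I) (t : ℕ) : (I → ℤ) → (I → ℤ) := rs.toCartanScheme.wmap a f t

end GenRootSystem

/-!
Call the positive roots on which `g` is negative the inversions of `g` at `a`. If there are
none, `R^+(a) = R^+_g(a)`. Otherwise `g` is negative on some simple root `α_i`, because a form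
that is nonnegative on the simple roots is nonnegative on all positive roots. The reflection
`s^a_i` maps `R^+(a) \ {α_i}` onto `R^+(τ_i a) \ {α_i}` and `R^+_g(a)` onto `R^+_{g'}(τ_i a)`
with `g' = g ∘ s^{τ_i a}_i`, so the inversions of `g'` at `τ_i a` are the images of those of `g`
other than `α_i`, one fewer; induction gives the word, with `i` prepended.

Conversely, for any word `f`, each positive root outside `1^a s_{f,t}(R^+(a_{f,t}))` is one of
the `t` roots `1^a s_{f,s-1}(α_{f(s)})`, `s ≤ t`. For `t = n` these at most `n` roots contain the
`n` inversions, hence are exactly the inversions.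
-/

namespace CartanScheme

variable {I : Type*} [Fintype I] [DecidableEq I] {A : Type*} (cs : CartanScheme I A)

lemma sref_apply_of_ne (a : A) {i j : I} (v : I → ℤ) (hj : j ≠ i) :
    cs.sref a i v j = v j := by
  simp [sref, hj]

lemma sref_single_self (a : A) (i : I) : cs.sref a i (Pi.single i 1) = -Pi.single i 1 := by
  funext l
  by_cases hl : l = i
  · subst hl
    simp [sref, Pi.single_apply, cs.c_diag]
  · simp [sref, hl]

lemma sref_sref (a : A) (i : I) (v : I → ℤ) : cs.sref (cs.τ i a) i (cs.sref a i v) = v := by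
  funext l
  by_cases hl : l = i
  · subst hl
    simp only [sref, cs.c_invar, if_true, mul_sub, Finset.sum_sub_distrib, mul_ite, mul_zero,
      Finset.sum_ite_eq', Finset.mem_univ, cs.c_diag]
    ring
  · simp [sref, hl]

lemma sref_injective (a : A) (i : I) : Function.Injective (cs.sref a i) :=
  Function.LeftInverse.injective (cs.sref_sref a i)

def srefHom (a : A) (i : I) : (I → ℤ) →+ (I → ℤ) where
  toFun := cs.sref a i
  map_zero' := by funext l; simp [sref]
  map_add' v w := by
    funext l
    simp only [sref, Pi.add_apply, mul_add, Finset.sum_add_distrib]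
    split_ifs <;> ring

@[simp]
lemma srefHom_apply (a : A) (i : I) (v : I → ℤ) : cs.srefHom a i v = cs.sref a i v := rfl

end CartanScheme

namespace GenRootSystem

variable {I : Type*} [Fintype I] [DecidableEq I] {A : Type*}

/-- Even the empty word `f : ℕ → I` needs an index; only (R4) guarantees one. -/
theorem nonempty_index (rs : GenRootSystem I A) (a : A) : Nonempty I :=
  let ⟨f, _⟩ := (rs.R4 a a).1 rfl
  ⟨f 0⟩

variable (rs : GenRootSystem I A)

lemma sref_sref' (a : A) (i : I) (v : I → ℤ) :
    rs.sref a i (rs.sref (rs.τ i a) i v) = v := by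
  simpa [rs.τ_invol] using rs.sref_sref (rs.τ i a) i v

lemma single_mem_R (a : A) (i : I) : (Pi.single i 1 : I → ℤ) ∈ rs.R a :=
  (rs.R2 a i ▸ Set.mem_insert _ _ : Pi.single i 1 ∈ rs.R a ∩ _).1

lemma single_mem_Rp (a : A) (i : I) : (Pi.single i 1 : I → ℤ) ∈ rs.Rp a :=
  ⟨rs.single_mem_R a i, fun j => by by_cases h : j = i <;> simp [h]⟩

lemma neg_single_notMem_Rp (a : A) (i : I) : -(Pi.single i 1 : I → ℤ) ∉ rs.Rp a :=
  fun h => by simpa using h.2 i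

lemma mem_Rp_or_neg_mem_Rp {a : A} {v : I → ℤ} (hv : v ∈ rs.R a) :
    v ∈ rs.Rp a ∨ -v ∈ rs.Rp a := by
  rw [rs.R1 a] at hv
  exact hv.imp id fun h => by simpa [Rp] using h

lemma neg_mem_R {a : A} {v : I → ℤ} (hv : v ∈ rs.R a) : -v ∈ rs.R a := by
  rcases rs.mem_Rp_or_neg_mem_Rp hv with h | h
  · rw [rs.R1 a]; exact Or.inr (by simpa [Rp] using h)
  · exact h.1

lemma sref_mem_R {a : A} (i : I) {v : I → ℤ} (hv : v ∈ rs.R a) :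
    rs.sref a i v ∈ rs.R (rs.τ i a) :=
  rs.R3 a i ▸ Set.mem_image_of_mem _ hv

lemma mem_Rp_of_pos {a : A} {v : I → ℤ} (hv : v ∈ rs.R a) {j : I} (hj : 0 < v j) :
    v ∈ rs.Rp a :=
  (rs.mem_Rp_or_neg_mem_Rp hv).resolve_right fun h => by
    linarith [h.2 j, show (-v) j = -v j from rfl]

lemma exists_pos_of_mem_Rp {a : A} {i : I} {v : I → ℤ} (hv : v ∈ rs.Rp a)
    (hne : v ≠ Pi.single i 1) : ∃ j ≠ i, 0 < v j := by
  by_contra! h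
  have hmul : v = v i • (Pi.single i 1 : I → ℤ) := by
    funext j
    by_cases hj : j = i
    · subst hj; simp
    · simp [hj, le_antisymm (h j hj) (hv.2 j)]
  have hmem : v ∈ rs.R a ∩ Set.range fun z : ℤ => z • (Pi.single i 1 : I → ℤ) :=
    ⟨hv.1, v i, hmul.symm⟩
  rw [rs.R2] at hmem
  rcases hmem with h1 | h1
  · exact hne h1
  · exact rs.neg_single_notMem_Rp a i (h1 ▸ hv)

lemma sref_mem_Rp {a : A} {i : I} {v : I → ℤ} (hv : v ∈ rs.Rp a) (hne : v ≠ Pi.single i 1) :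
    rs.sref a i v ∈ rs.Rp (rs.τ i a) := by
  obtain ⟨j, hji, hj⟩ := rs.exists_pos_of_mem_Rp hv hne
  exact rs.mem_Rp_of_pos (rs.sref_mem_R i hv.1) (by rwa [rs.sref_apply_of_ne a v hji])

lemma sref_image_Rp_diff_single (a : A) (i : I) :
    rs.sref a i '' (rs.Rp a \ {Pi.single i 1}) = rs.Rp (rs.τ i a) \ {Pi.single i 1} := by
  have maps : ∀ b, rs.sref b i '' (rs.Rp b \ {Pi.single i 1})
      ⊆ rs.Rp (rs.τ i b) \ {Pi.single i 1} := by
    rintro b _ ⟨v, ⟨hv, hne⟩, rfl⟩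
    refine ⟨rs.sref_mem_Rp hv hne, fun h => rs.neg_single_notMem_Rp b i ?_⟩
    rw [← rs.sref_single_self (rs.τ i b), ← Set.mem_singleton_iff.1 h, rs.sref_sref]
    exact hv
  refine (maps a).antisymm fun w hw => ⟨rs.sref (rs.τ i a) i w, ?_, rs.sref_sref' a i w⟩
  simpa [rs.τ_invol] using maps (rs.τ i a) ⟨w, hw, rfl⟩

/-- `R^+_g(a)`. -/
def Rg (a : A) (g : (I → ℤ) →+ ℝ) : Set (I → ℤ) := {v ∈ rs.R a | 0 < g v}

abbrev pullback (a : A) (i : I) (g : (I → ℤ) →+ ℝ) : (I → ℤ) →+ ℝ :=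
  g.comp (rs.srefHom (rs.τ i a) i)

lemma pullback_ne_zero {a : A} {i : I} {g : (I → ℤ) →+ ℝ}
    (hg : ∀ v ∈ rs.R a, g v ≠ 0) :
    ∀ v ∈ rs.R (rs.τ i a), rs.pullback a i g v ≠ 0 := fun v hv =>
  hg _ (by simpa [rs.τ_invol] using rs.sref_mem_R i hv)

lemma sref_image_Rg (a : A) (i : I) (g : (I → ℤ) →+ ℝ) :
    rs.sref a i '' rs.Rg a g = rs.Rg (rs.τ i a) (rs.pullback a i g) := by
  ext w
  constructor
  · rintro ⟨v, ⟨hv, hpos⟩, rfl⟩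
    exact ⟨rs.sref_mem_R i hv, by simpa [rs.sref_sref] using hpos⟩
  · rintro ⟨hw, hpos⟩
    refine ⟨rs.sref (rs.τ i a) i w, ⟨?_, hpos⟩, rs.sref_sref' a i w⟩
    simpa [rs.τ_invol] using rs.sref_mem_R i hw

lemma sref_image_Rg_pullback (a : A) (i : I) (g : (I → ℤ) →+ ℝ) :
    rs.sref (rs.τ i a) i '' rs.Rg (rs.τ i a) (rs.pullback a i g) = rs.Rg a g := by
  rw [← rs.sref_image_Rg, Set.image_image]
  simp [rs.sref_sref]

lemma neg_Rg_inter_Rp {a : A} {g : (I → ℤ) →+ ℝ} (hg : ∀ v ∈ rs.R a, g v ≠ 0) :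
    -rs.Rg a g ∩ rs.Rp a = rs.Rp a \ rs.Rg a g := by
  ext v
  simp only [Rg, Set.mem_inter_iff, Set.mem_neg, Set.mem_sdiff, Set.mem_ofPred_eq, map_neg,
    Left.neg_pos_iff]
  constructor
  · rintro ⟨⟨-, hneg⟩, hv⟩
    exact ⟨hv, fun h => (h.2.trans hneg).false⟩
  · rintro ⟨hv, hnot⟩
    have hneg : g v < 0 := (hg v hv.1).lt_of_le (not_lt.1 fun h => hnot ⟨hv.1, h⟩)
    exact ⟨⟨rs.neg_mem_R hv.1, hneg⟩, hv⟩

lemma Rg_eq_Rp {a : A} {g : (I → ℤ) →+ ℝ} (h : rs.Rp a \ rs.Rg a g = ∅) :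
    rs.Rg a g = rs.Rp a := by
  refine Set.Subset.antisymm (fun v hv => ?_) (Set.sdiff_eq_empty.1 h)
  refine (rs.mem_Rp_or_neg_mem_Rp hv.1).resolve_right fun hneg => ?_
  have := (Set.sdiff_eq_empty.1 h hneg).2
  rw [map_neg] at this
  linarith [hv.2]

lemma exists_simple_neg {a : A} {g : (I → ℤ) →+ ℝ} (hg : ∀ v ∈ rs.R a, g v ≠ 0)
    (h : (rs.Rp a \ rs.Rg a g).Nonempty) : ∃ i, g (Pi.single i 1) < 0 := by
  by_contra! hsimple
  obtain ⟨v, hv, hnot⟩ := h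
  have hsum : g v = ∑ j, (v j : ℤ) • g (Pi.single j 1) := by
    conv_lhs => rw [← Finset.univ_sum_single v]
    refine (map_sum _ _ _).trans (Finset.sum_congr rfl fun j _ => ?_)
    rw [← map_zsmul, ← Pi.single_smul, smul_eq_mul, mul_one]
  have hnonneg : 0 ≤ g v :=
    hsum ▸ Finset.sum_nonneg fun j _ => zsmul_nonneg (hsimple j) (hv.2 j)
  exact hnot ⟨hv.1, (hg v hv.1).symm.lt_of_le hnonneg⟩

lemma inversions_pullback {a : A} {i : I} {g : (I → ℤ) →+ ℝ} (hi : g (Pi.single i 1) < 0) :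
    rs.Rp (rs.τ i a) \ rs.Rg (rs.τ i a) (rs.pullback a i g)
      = rs.sref a i '' ((rs.Rp a \ rs.Rg a g) \ {Pi.single i 1}) := by
  have hsimple : Pi.single i 1 ∈ rs.Rg (rs.τ i a) (rs.pullback a i g) :=
    ⟨rs.single_mem_R _ i, by simpa [rs.sref_single_self] using hi⟩
  rw [Set.sdiff_sdiff_comm, Set.image_sdiff (rs.sref_injective a i), rs.sref_image_Rp_diff_single,
    rs.sref_image_Rg, Set.sdiff_sdiff_comm, Set.sdiff_singleton_eq_self]
  exact fun h => h.2 hsimple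

lemma encard_inversions_pullback {a : A} {i : I} {g : (I → ℤ) →+ ℝ} {n : ℕ}
    (hi : g (Pi.single i 1) < 0) (hn : (rs.Rp a \ rs.Rg a g).encard = n + 1) :
    (rs.Rp (rs.τ i a) \ rs.Rg (rs.τ i a) (rs.pullback a i g)).encard = n := by
  have hmem : Pi.single i 1 ∈ rs.Rp a \ rs.Rg a g :=
    ⟨rs.single_mem_Rp a i, fun h => (h.2.trans hi).false⟩
  rw [rs.inversions_pullback hi, (rs.sref_injective a i).encard_image]
  rw [← Set.encard_sdiff_singleton_add_one hmem] at hn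
  exact WithTop.add_right_cancel ENat.one_ne_top hn

lemma obj_succ_of_tail (a : A) {f f' : ℕ → I} (htail : ∀ s, 1 ≤ s → f (s + 1) = f' s)
    (t : ℕ) :
    rs.obj a f (t + 1) = rs.obj (rs.τ (f 1) a) f' t := by
  induction t with
  | zero => rfl
  | succ t ih =>
    change rs.τ (f (t + 2)) (rs.obj a f (t + 1)) = rs.τ (f' (t + 1)) (rs.obj _ f' t)
    rw [ih, htail (t + 1) (by omega)]

lemma wmap_succ_of_tail (a : A) {f f' : ℕ → I} (htail : ∀ s, 1 ≤ s → f (s + 1) = f' s)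
    (t : ℕ) :
    rs.wmap a f (t + 1) = rs.sref (rs.τ (f 1) a) (f 1) ∘ rs.wmap (rs.τ (f 1) a) f' t := by
  induction t with
  | zero => rfl
  | succ t ih =>
    change rs.wmap a f (t + 1) ∘ rs.sref (rs.obj a f (t + 2)) (f (t + 2)) =
      _ ∘ (rs.wmap _ f' t ∘ rs.sref (rs.obj _ f' (t + 1)) (f' (t + 1)))
    rw [ih, rs.obj_succ_of_tail a htail (t + 1), htail (t + 1) (by omega)]
    rfl

theorem exists_word {n : ℕ} {a : A} {g : (I → ℤ) →+ ℝ} (hg : ∀ v ∈ rs.R a, g v ≠ 0)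
    (hn : (rs.Rp a \ rs.Rg a g).encard = n) :
    ∃ f : ℕ → I, rs.wmap a f n '' rs.Rp (rs.obj a f n) = rs.Rg a g := by
  induction n generalizing a g with
  | zero =>
    obtain ⟨i⟩ := rs.nonempty_index a
    refine ⟨fun _ => i, ?_⟩
    change id '' rs.Rp a = _
    rw [Set.image_id, rs.Rg_eq_Rp (Set.encard_eq_zero.1 hn)]
  | succ n ih =>
    obtain ⟨i, hi⟩ := rs.exists_simple_neg hg (Set.nonempty_of_encard_ne_zero (by simp [hn]))
    obtain ⟨f', hf'⟩ :=
      ih (rs.pullback_ne_zero hg) (rs.encard_inversions_pullback hi (by exact_mod_cast hn))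
    let f : ℕ → I := fun t => if t = 1 then i else f' (t - 1)
    have htail : ∀ s, 1 ≤ s → f (s + 1) = f' s := fun s hs => by simp [f]; omega
    refine ⟨f, ?_⟩
    rw [rs.obj_succ_of_tail a htail, rs.wmap_succ_of_tail a htail, Set.image_comp]
    simp only [f, if_pos rfl]
    rw [hf', rs.sref_image_Rg_pullback]

lemma Rp_subset_insert_sref_image (b : A) (i : I) :
    rs.Rp b ⊆ insert (Pi.single i 1) (rs.sref (rs.τ i b) i '' rs.Rp (rs.τ i b)) := by
  intro v hv
  by_cases hvi : v = Pi.single i 1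
  · exact Or.inl hvi
  · right
    have hmem : v ∈ rs.sref (rs.τ i b) i '' (rs.Rp (rs.τ i b) \ {Pi.single i 1}) := by
      rw [rs.sref_image_Rp_diff_single, rs.τ_invol]
      exact ⟨hv, hvi⟩
    exact Set.image_mono Set.sdiff_subset hmem

lemma image_wmap_Rp_subset_succ (a : A) (f : ℕ → I) (t : ℕ) :
    rs.wmap a f t '' rs.Rp (rs.obj a f t) ⊆
      insert (rs.wmap a f t (Pi.single (f (t + 1)) 1))
        (rs.wmap a f (t + 1) '' rs.Rp (rs.obj a f (t + 1))) := by
  refine (Set.image_mono (rs.Rp_subset_insert_sref_image _ (f (t + 1)))).trans ?_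
  rw [Set.image_insert_eq, Set.image_image]
  rfl

lemma diff_image_wmap_subset (a : A) (f : ℕ → I) (t : ℕ) :
    rs.Rp a \ rs.wmap a f t '' rs.Rp (rs.obj a f t) ⊆
      (fun s => rs.wmap a f (s - 1) (Pi.single (f s) 1)) '' Set.Icc 1 t := by
  induction t with
  | zero => exact fun v hv => (hv.2 ⟨v, hv.1, rfl⟩).elim
  | succ t ih =>
    rintro v ⟨hv, hnot⟩
    by_cases hvt : v ∈ rs.wmap a f t '' rs.Rp (rs.obj a f t)
    · have := (rs.image_wmap_Rp_subset_succ a f t hvt).resolve_right hnot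
      exact ⟨t + 1, ⟨by omega, le_rfl⟩, this.symm⟩
    · obtain ⟨s, ⟨hs1, hst⟩, rfl⟩ := ih ⟨hv, hvt⟩
      exact ⟨s, ⟨hs1, by omega⟩, rfl⟩

theorem inversions_eq_image {a : A} {g : (I → ℤ) →+ ℝ} {n : ℕ} {f : ℕ → I}
    (hn : (rs.Rp a \ rs.Rg a g).encard = n)
    (hf : rs.wmap a f n '' rs.Rp (rs.obj a f n) = rs.Rg a g) :
    rs.Rp a \ rs.Rg a g = (fun t => rs.wmap a f (t - 1) (Pi.single (f t) 1)) '' Set.Icc 1 n := by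
  refine (Set.finite_of_encard_eq_coe hn).eq_of_subset_of_encard_le
    (hf ▸ rs.diff_image_wmap_subset a f n) ?_
  rw [hn]
  refine (Set.encard_image_le _ _).trans ?_
  rw [← Finset.coe_Icc, Set.encard_coe_eq_coe_finsetCard, Nat.card_Icc, Nat.add_sub_cancel]

theorem positive_system_by_word_of_form (a : A) (g : (I → ℤ) →+ ℝ)
    (hg : ∀ v ∈ rs.R a, g v ≠ 0) (n : ℕ) (hfin : (-rs.Rg a g ∩ rs.Rp a).Finite)
    (hn : (-rs.Rg a g ∩ rs.Rp a).ncard = n) :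
    (∃ f : ℕ → I, rs.wmap a f n '' rs.Rp (rs.obj a f n) = rs.Rg a g) ∧
    ∀ f : ℕ → I, rs.wmap a f n '' rs.Rp (rs.obj a f n) = rs.Rg a g →
      -rs.Rg a g ∩ rs.Rp a =
        {v | ∃ t : ℕ, 1 ≤ t ∧ t ≤ n ∧ v = rs.wmap a f (t - 1) (Pi.single (f t) 1)} := by
  rw [rs.neg_Rg_inter_Rp hg] at hfin hn ⊢
  have hN : (rs.Rp a \ rs.Rg a g).encard = n := by rw [← hfin.cast_ncard_eq, hn]
  refine ⟨rs.exists_word hg hN, fun f hf => ?_⟩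
  rw [rs.inversions_eq_image hN hf]
  ext v
  simp [and_assoc, eq_comm]

end GenRootSystem

def coeffForm {I : Type*} [Fintype I] (c : I → ℝ) : (I → ℤ) →+ ℝ where
  toFun v := ∑ i, c i * (v i : ℝ)
  map_zero' := by simp
  map_add' v w := by simp [mul_add, Finset.sum_add_distrib]

/-- Let `g : V^a → ℝ` be linear (given by coefficients `c : I → ℝ`) with
`g⁻¹(0) ∩ R(a) = ∅`, set `R^+_g(a) := {α ∈ R(a) : g(α) > 0}` and
`n := |(−R^+_g(a)) ∩ R^+(a)| < ∞`.  Then there exists `f` with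
`1^a s_{f,n}(R^+(a_{f,n})) = R^+_g(a)`, and for any such `f`,
`(−R^+_g(a)) ∩ R^+(a) = { 1^a s_{f,t-1}(α^{a_{f,t-1}}_{f(t)}) : 1 ≤ t ≤ n }`. -/
theorem positive_system_by_word {I : Type*} [Fintype I] [DecidableEq I] {A : Type*}
    (rs : GenRootSystem I A) (a : A) (c : I → ℝ)
    (hg : ∀ v ∈ rs.R a, (∑ i, c i * (v i : ℝ)) ≠ 0)
    (n : ℕ)
    (hfin : ((-{v ∈ rs.R a | 0 < ∑ i, c i * (v i : ℝ)}) ∩ rs.Rp a).Finite)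
    (hn : ((-{v ∈ rs.R a | 0 < ∑ i, c i * (v i : ℝ)}) ∩ rs.Rp a).ncard = n) :
    (∃ f : ℕ → I,
        rs.wmap a f n '' rs.Rp (rs.obj a f n) = {v ∈ rs.R a | 0 < ∑ i, c i * (v i : ℝ)}) ∧
    (∀ f : ℕ → I,
        rs.wmap a f n '' rs.Rp (rs.obj a f n) = {v ∈ rs.R a | 0 < ∑ i, c i * (v i : ℝ)} →
        (-{v ∈ rs.R a | 0 < ∑ i, c i * (v i : ℝ)}) ∩ rs.Rp a =
          {v | ∃ t : ℕ, 1 ≤ t ∧ t ≤ n ∧ v = rs.wmap a f (t - 1) (Pi.single (f t) 1)}) :=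
  rs.positive_system_by_word_of_form a (coeffForm c) hg n hfin hn
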